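/- arXiv:2010.16353 — 2 statements merged into one kernel-verified Lean document; each statement's English description precedes it below -/
import Mathlib

section
/- Define A : ℕ × ℕ × ℕ → ℕ (output length with accumulator) by A(0, m, a) = 1 + a, A(d+1, 0, a) = a, and A(d+1, m+1, a) = A(d+1, m, A(d, m, a)). Then for all d, m, a: A(d, m, a) = C(m, d) + a. -/
/-- Output length of `amp_d` with input length `m` and accumulator length `a`. -/
def ampAccLen : ℕ → ℕ → ℕ → ℕ
  | 0, _, a => 1 + a
  | _ + 1, 0, a => a
  | d + 1, m + 1, a => ampAccLen (d + 1) m (ampAccLen d m a)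

/-- `A(d, m, a) = C(m, d) + a` for all `d, m, a`. -/
theorem ampAccLen_eq (d m a : ℕ) : ampAccLen d m a = m.choose d + a := by
  induction d generalizing m a with
  | zero => simp [ampAccLen, add_comm]
  | succ d ihd =>
    induction m generalizing a with
    | zero => simp [ampAccLen]
    | succ m ihm =>
      -- The inner call feeds `C(m, d)` into the accumulator: Pascal's rule.
      calc ampAccLen (d + 1) (m + 1) a = ampAccLen (d + 1) m (ampAccLen d m a) := by
            rw [ampAccLen]
        _ = m.choose (d + 1) + (m.choose d + a) := by rw [ihm, ihd]
        _ = (m + 1).choose (d + 1) + a := by rw [Nat.choose_succ_succ]; ring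
end

section
/- Let q_{d-1} = (q_1, ..., q_{d-1}) be a vector of non-negative rationals representing n^{d-1} (i.e., n^{d-1} = sum_i q_i * C(n,i) for all n) with q_1 = 1 for d ≥ 2. Define q_d = (q_1, 2(q_1 + q_2), 3(q_2 + q_3), ..., (d-1)(q_{d-2} + q_{d-1}), (d-1) q_{d-1}). Then componentwise, q_{d-1} + q_d ≤ shift(q_d), where shift(q_d) is the additive shift (q_d[1] + q_d[2], ..., q_d[d-1] + q_d[d], q_d[d]) and the shorter vector q_{d-1} is padded with zeros. -/
/-!
Componentwise the inequality reduces to `q i ≤ q_d (i + 1)` for `i < d` (the last entry is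
trivial). For `i + 1 < d` this holds because `q_d (i + 1) = (i + 1) (q i + q (i + 1))` with
`q ≥ 0`, and for `i + 1 = d` because `q_d d = (d - 1) q (d - 1)` with `d - 1 ≥ 1`.
-/

/-- The additive shift `(p₁ + p₂, …, p_{d-1} + p_d, p_d)` of a vector of length `d`. -/
def addShift {α : Type*} [Add α] (d : ℕ) (p : ℕ → α) (i : ℕ) : α :=
  if i < d then p i + p (i + 1) else p i

theorem add_le_addShift {α : Type*} [AddCommMonoid α] [PartialOrder α] [IsOrderedAddMonoid α]
    {d i : ℕ} {u p : ℕ → α} (hid : i ≤ d) (hu : i < d → u i ≤ p (i + 1))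
    (hud : u d ≤ 0) : u i + p i ≤ addShift d p i := by
  unfold addShift
  split_ifs with hi
  · rw [add_comm]
    gcongr
    exact hu hi
  · obtain rfl : i = d := by omega
    exact add_le_of_nonpos_left hud

theorem le_mul_add_of_one_le {α : Type*} [Semiring α] [PartialOrder α] [IsOrderedRing α]
    {a b c : α} (hc : 1 ≤ c) (ha : 0 ≤ a) (hb : 0 ≤ b) :
    a ≤ c * (a + b) :=
  calc a ≤ a + b := le_add_of_nonneg_right hb
    _ ≤ c * (a + b) := le_mul_of_one_le_left (add_nonneg ha hb) hc

theorem le_amp_annotation_succ {d i : ℕ} (hd : 2 ≤ d) {q qd : ℕ → ℚ} (hnn : ∀ i, 0 ≤ q i)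
    (hqd : ∀ i ∈ Finset.Icc 1 (d - 1), qd i = (i : ℚ) * (q (i - 1) + q i))
    (hqdd : qd d = ((d : ℚ) - 1) * q (d - 1)) (hi : i < d) : q i ≤ qd (i + 1) := by
  rcases (Nat.succ_le_of_lt hi).lt_or_eq with hlt | heq
  · rw [hqd (i + 1) (Finset.mem_Icc.mpr ⟨by omega, by omega⟩), Nat.add_sub_cancel]
    exact le_mul_add_of_one_le (by simp) (hnn i) (hnn (i + 1))
  · obtain rfl : i = d - 1 := by omega
    have hd1 : (1 : ℚ) ≤ (d : ℚ) - 1 := by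
      have : (2 : ℚ) ≤ d := by exact_mod_cast hd
      linarith
    rw [Nat.sub_add_cancel (by omega), hqdd]
    simpa using le_mul_add_of_one_le hd1 (hnn (d - 1)) le_rfl

theorem amp_annotation_split_general (d : ℕ) (hd : 2 ≤ d) (q qd : ℕ → ℚ)
    (hnn : ∀ i, 0 ≤ q i)
    (hqd : ∀ i ∈ Finset.Icc 1 (d - 1), qd i = (i : ℚ) * (q (i - 1) + q i))
    (hqdd : qd d = ((d : ℚ) - 1) * q (d - 1)) :
    ∀ i ∈ Finset.Icc 1 d,
      (if i ≤ d - 1 then q i else 0) + qd i ≤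
        (if i < d then qd i + qd (i + 1) else qd i) := by
  intro i hi
  refine add_le_addShift (u := fun j => if j ≤ d - 1 then q j else 0)
    (Finset.mem_Icc.mp hi).2 (fun hid => ?_) (if_neg (by omega)).le
  rw [if_pos (by omega)]
  exact le_amp_annotation_succ hd hnn hqd hqdd hid

/-- The annotation `q_d` of `amp_d`, built from the annotation `q` representing
`n ^ (d - 1)`, satisfies the componentwise inequality
`q_{d-1} + q_d ≤ shift (q_d)` (with `q_{d-1}` padded by zeros). -/
theorem amp_annotation_split (d : ℕ) (hd : 2 ≤ d) (q qd : ℕ → ℚ)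
    (hnn : ∀ i, 0 ≤ q i) (hq0 : q 0 = 0) (hq1 : q 1 = 1)
    (hrep : ∀ n : ℕ,
      (n : ℚ) ^ (d - 1) = ∑ i ∈ Finset.Icc 1 (d - 1), q i * (n.choose i : ℚ))
    (hqd : ∀ i ∈ Finset.Icc 1 (d - 1), qd i = (i : ℚ) * (q (i - 1) + q i))
    (hqdd : qd d = ((d : ℚ) - 1) * q (d - 1)) :
    ∀ i ∈ Finset.Icc 1 d,
      (if i ≤ d - 1 then q i else 0) + qd i ≤
        (if i < d then qd i + qd (i + 1) else qd i) :=
  amp_annotation_split_general d hd q qd hnn hqd hqdd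
end
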